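/- arXiv:2410.22258 — 2 statements merged into one kernel-verified Lean document; each statement's English description precedes it below -/
import Mathlib

section
/- Let A11 ∈ ℝ^{n1×n1} and A22 ∈ ℝ^{n2×n2} be nilpotent with A11^{p1} = 0 and A22^{p2} = 0, let A12 ∈ ℝ^{n1×n2}, B1 ∈ ℝ^{n1×c₋}, B2 ∈ ℝ^{n2×c₋}, and set A = [[A11, A12], [0, A22]] and B = [[B1], [B2]] (so A21 = 0). Let X₋ ∈ ℝ^{c₋×c₋} be symmetric positive definite, ε > 0, H1 ∈ ℝ^{n1×n1}, H2 ∈ ℝ^{n2×n2}. Define X̃ = B X₋⁻¹ Bᵀ with blocks X̃11 ∈ ℝ^{n1×n1}, X̃12 ∈ ℝ^{n1×n2}, X̃22 ∈ ℝ^{n2×n2} partitioned conformably; T2 = Σ_{k=0}^{p2−1} A22^k (X̃22 + H2ᵀ H2 + ε I)(A22ᵀ)^k; X̂11 = A12 T2 A12ᵀ + X̃11 + (X̃12 + A12 T2 A22ᵀ)(T2 − A22 T2 A22ᵀ − X̃22)⁻¹ (X̃12 + A12 T2 A22ᵀ)ᵀ; and T1 = Σ_{k=0}^{p1−1} A11^k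 (X̂11 + H1ᵀ H1 + ε I)(A11ᵀ)^k. Then T1 and T2 are positive definite, and with P = blkdiag(T1⁻¹, T2⁻¹) the matrix F = [[P − Aᵀ P A, −Aᵀ P B], [−Bᵀ P A, X₋ − Bᵀ P B]] is positive definite. -/
/-!
`T1` and `T2` are finite Gramians of nilpotent matrices, so they solve the discrete Lyapunov
equations `T - A T Aᵀ = M` with `M ≻ 0` and are therefore positive definite.
With `Q = blkdiag(T1, T2) = P⁻¹`, the matrix `F` is the Schur complement of `Q` in
`[[Q, [A B]], [[A B]ᵀ, blkdiag(P, X₋)]]`, whose other Schur complement is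
`Q - A Q Aᵀ - B X₋⁻¹ Bᵀ`. Since `A21 = 0`, the Lyapunov equations turn the `(2,2)` block of
the latter into `H2ᵀ H2 + ε I`, and `X̂11` is chosen exactly so that eliminating this block
leaves `H1ᵀ H1 + ε I`.
-/

open Matrix Finset
open scoped ComplexOrder

namespace Matrix

theorem fromBlocks_sub {l m n o α : Type*} [Sub α] (A : Matrix n l α) (B : Matrix n m α)
    (C : Matrix o l α) (D : Matrix o m α) (A' : Matrix n l α) (B' : Matrix n m α)
    (C' : Matrix o l α) (D' : Matrix o m α) :
    fromBlocks A B C D - fromBlocks A' B' C' D'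
      = fromBlocks (A - A') (B - B') (C - C') (D - D') := by
  ext (i | i) (j | j) <;> rfl

section Schur

variable {𝕜 m n : Type*} [RCLike 𝕜] [Fintype m] [Fintype n] [DecidableEq m]
  [DecidableEq n]

/- Mathlib's semidefinite Schur criterion, upgraded to definiteness through
`det (fromBlocks A B Bᴴ D) = det A * det (D - Bᴴ A⁻¹ B)`. -/
theorem posDef_fromBlocks₁₁_iff {A : Matrix m m 𝕜} (B : Matrix m n 𝕜) (D : Matrix n n 𝕜)
    (hA : A.PosDef) : (fromBlocks A B Bᴴ D).PosDef ↔ (D - Bᴴ * A⁻¹ * B).PosDef := by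
  let := hA.isUnit.invertible
  have hdet : (fromBlocks A B Bᴴ D).det = A.det * (D - Bᴴ * A⁻¹ * B).det := by
    rw [det_fromBlocks₁₁, invOf_eq_nonsing_inv]
  have hpsd := hA.fromBlocks₁₁ B D
  constructor
  · intro h
    rw [(hpsd.mp h.posSemidef).posDef_iff_det_ne_zero]
    exact right_ne_zero_of_mul (hdet ▸ h.det_pos.ne')
  · intro h
    rw [(hpsd.mpr h.posSemidef).posDef_iff_det_ne_zero, hdet]
    exact mul_ne_zero hA.det_pos.ne' h.det_pos.ne'

theorem posDef_fromBlocks₂₂_iff (A : Matrix m m 𝕜) (B : Matrix m n 𝕜) {D : Matrix n n 𝕜}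
    (hD : D.PosDef) : (fromBlocks A B Bᴴ D).PosDef ↔ (A - B * D⁻¹ * Bᴴ).PosDef := by
  let := hD.isUnit.invertible
  have hdet : (fromBlocks A B Bᴴ D).det = D.det * (A - B * D⁻¹ * Bᴴ).det := by
    rw [det_fromBlocks₂₂, invOf_eq_nonsing_inv]
  have hpsd := hD.fromBlocks₂₂ A B
  constructor
  · intro h
    rw [(hpsd.mp h.posSemidef).posDef_iff_det_ne_zero]
    exact right_ne_zero_of_mul (hdet ▸ h.det_pos.ne')
  · intro h
    rw [(hpsd.mpr h.posSemidef).posDef_iff_det_ne_zero, hdet]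
    exact mul_ne_zero hD.det_pos.ne' h.det_pos.ne'

theorem PosDef.fromBlocks_zero {A : Matrix m m 𝕜} {D : Matrix n n 𝕜} (hA : A.PosDef)
    (hD : D.PosDef) : (fromBlocks A 0 0 D).PosDef := by
  simpa using (posDef_fromBlocks₁₁_iff (0 : Matrix m n 𝕜) D hA).mpr (by simpa using hD)

/- Both matrices are Schur complements in `fromBlocks Q C Cᴴ D`, where `C = [A B]` and
`D = blkdiag(Q⁻¹, X)`. -/
theorem posDef_fromBlocks_inv_sub_of_posDef_sub {Q : Matrix n n 𝕜} {X : Matrix m m 𝕜}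
    (hQ : Q.PosDef) (hX : X.PosDef) (A : Matrix n n 𝕜) (B : Matrix n m 𝕜)
    (h : (Q - A * Q * Aᴴ - B * X⁻¹ * Bᴴ).PosDef) :
    (fromBlocks (Q⁻¹ - Aᴴ * Q⁻¹ * A) (-(Aᴴ * Q⁻¹ * B)) (-(Bᴴ * Q⁻¹ * A))
      (X - Bᴴ * Q⁻¹ * B)).PosDef := by
  set D := fromBlocks Q⁻¹ 0 0 X
  set C := fromCols A B
  have hD : D.PosDef := hQ.inv.fromBlocks_zero hX
  have hDinv : D⁻¹ = fromBlocks Q 0 0 X⁻¹ := by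
    simp [D, inv_fromBlocks_zero₂₁_of_isUnit_iff, hQ.isUnit, hX.isUnit,
      nonsing_inv_nonsing_inv _ ((isUnit_iff_isUnit_det Q).mp hQ.isUnit)]
  have hG : (fromBlocks Q C Cᴴ D).PosDef := by
    refine (posDef_fromBlocks₂₂_iff Q C hD).mpr ?_
    simpa [C, hDinv, conjTranspose_fromCols_eq_fromRows_conjTranspose, fromCols_mul_fromBlocks,
      fromCols_mul_fromRows, sub_sub] using h
  convert (posDef_fromBlocks₁₁_iff C D hQ).mp hG using 1
  simp [C, D, conjTranspose_fromCols_eq_fromRows_conjTranspose, fromRows_mul, fromBlocks_sub]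

end Schur

theorem PosSemidef.mul_mul_transpose_same {m n : Type*} [Fintype m] [Fintype n]
    {M : Matrix n n ℝ} (hM : M.PosSemidef) (C : Matrix m n ℝ) : (C * M * Cᵀ).PosSemidef := by
  simpa using hM.mul_mul_conjTranspose_same C

theorem posDef_transpose_mul_self_add_smul_one {n : Type*} [Fintype n] [DecidableEq n]
    (H : Matrix n n ℝ) {ε : ℝ} (hε : 0 < ε) : (Hᵀ * H + ε • (1 : Matrix n n ℝ)).PosDef :=
  PosDef.posSemidef_add (by simpa using posSemidef_conjTranspose_mul_self H) (PosDef.one.smul hε)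

theorem PosSemidef.add_transpose_mul_self_add_smul_one {n : Type*} [Fintype n] [DecidableEq n]
    {X : Matrix n n ℝ} (hX : X.PosSemidef) (H : Matrix n n ℝ) {ε : ℝ} (hε : 0 < ε) :
    (X + Hᵀ * H + ε • (1 : Matrix n n ℝ)).PosDef :=
  add_assoc X _ _ ▸ PosDef.posSemidef_add hX (posDef_transpose_mul_self_add_smul_one H hε)

section Gramian

variable {R n : Type*} [Fintype n] [DecidableEq n]

def finiteGramian [Ring R] (A M : Matrix n n R) (p : ℕ) : Matrix n n R :=
  ∑ k ∈ range p, A ^ k * M * Aᵀ ^ k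

theorem finiteGramian_sub_mul_mul_transpose [Ring R] (A M : Matrix n n R) (p : ℕ) :
    finiteGramian A M p - A * finiteGramian A M p * Aᵀ = M - A ^ p * M * Aᵀ ^ p := by
  have hstep (k : ℕ) : A * (A ^ k * M * Aᵀ ^ k) * Aᵀ = A ^ (k + 1) * M * Aᵀ ^ (k + 1) := by
    rw [pow_succ' A, pow_succ Aᵀ]
    simp only [Matrix.mul_assoc]
  simpa [finiteGramian, Matrix.mul_sum, Matrix.sum_mul, hstep, ← sum_sub_distrib] using
    sum_range_sub' (fun k => A ^ k * M * Aᵀ ^ k) p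

theorem finiteGramian_sub_mul_mul_transpose_of_pow_eq_zero [Ring R] {A : Matrix n n R} {p : ℕ}
    (hA : A ^ p = 0) (M : Matrix n n R) :
    finiteGramian A M p - A * finiteGramian A M p * Aᵀ = M := by
  simp [finiteGramian_sub_mul_mul_transpose, hA]

theorem posDef_finiteGramian {A M : Matrix n n ℝ} {p : ℕ} (hA : A ^ p = 0) (hM : M.PosDef) :
    (finiteGramian A M p).PosDef := by
  have hG : (finiteGramian A M p).PosSemidef :=
    posSemidef_sum _ fun k _ => by
      simpa [transpose_pow] using hM.posSemidef.mul_mul_transpose_same (A ^ k)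
  rw [← sub_add_cancel (finiteGramian A M p) (A * finiteGramian A M p * Aᵀ),
    finiteGramian_sub_mul_mul_transpose_of_pow_eq_zero hA]
  exact hM.add_posSemidef (hG.mul_mul_transpose_same A)

end Gramian

theorem posDef_fromBlocks_sub_conj_sub {m n : Type*} [Fintype m] [Fintype n] [DecidableEq m]
    [DecidableEq n] {T1 : Matrix m m ℝ} {T2 : Matrix n n ℝ} (A11 : Matrix m m ℝ)
    (A12 : Matrix m n ℝ) (A22 : Matrix n n ℝ) {X : Matrix (m ⊕ n) (m ⊕ n) ℝ}
    (hT2 : T2.IsSymm) (hX : X.IsSymm) (hS : (T2 - A22 * T2 * A22ᵀ - X.toBlocks₂₂).PosDef)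
    (hT1 : (T1 - A11 * T1 * A11ᵀ - A12 * T2 * A12ᵀ - X.toBlocks₁₁ -
      (X.toBlocks₁₂ + A12 * T2 * A22ᵀ) * (T2 - A22 * T2 * A22ᵀ - X.toBlocks₂₂)⁻¹ *
        (X.toBlocks₁₂ + A12 * T2 * A22ᵀ)ᵀ).PosDef) :
    (fromBlocks T1 0 0 T2 - fromBlocks A11 A12 0 A22 * fromBlocks T1 0 0 T2 *
      (fromBlocks A11 A12 0 A22)ᵀ - X).PosDef := by
  set R := X.toBlocks₁₂ + A12 * T2 * A22ᵀ
  set S := T2 - A22 * T2 * A22ᵀ - X.toBlocks₂₂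
  have hX21 : X.toBlocks₂₁ = X.toBlocks₁₂ᵀ := by
    rw [← fromBlocks_toBlocks X, IsSymm, fromBlocks_transpose] at hX
    exact (fromBlocks_inj.mp hX).2.2.1.symm
  have hblocks : fromBlocks T1 0 0 T2 - fromBlocks A11 A12 0 A22 * fromBlocks T1 0 0 T2 *
      (fromBlocks A11 A12 0 A22)ᵀ - X = fromBlocks
        (T1 - A11 * T1 * A11ᵀ - A12 * T2 * A12ᵀ - X.toBlocks₁₁) (-R) (-R)ᴴ S := by
    conv_lhs => rw [← fromBlocks_toBlocks X]
    rw [fromBlocks_transpose, fromBlocks_multiply, fromBlocks_multiply, fromBlocks_sub,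
      fromBlocks_sub, hX21]
    congr 1 <;>
      simp only [R, S, conjTranspose_eq_transpose_of_trivial, transpose_neg, transpose_add,
        transpose_mul, transpose_transpose, transpose_zero, hT2.eq, Matrix.mul_assoc,
        Matrix.zero_mul, Matrix.mul_zero, add_zero, zero_add] <;>
      abel
  rw [hblocks, posDef_fromBlocks₂₂_iff _ _ hS]
  simpa only [conjTranspose_eq_transpose_of_trivial, transpose_neg, Matrix.neg_mul,
    Matrix.mul_neg, neg_neg] using hT1

end Matrix

theorem roesser_gramian_parameterization_renders_F_posdef_general
    (n1 n2 cm p1 p2 : ℕ)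
    (A11 : Matrix (Fin n1) (Fin n1) ℝ) (hA11 : A11 ^ p1 = 0)
    (A22 : Matrix (Fin n2) (Fin n2) ℝ) (hA22 : A22 ^ p2 = 0)
    (A12 : Matrix (Fin n1) (Fin n2) ℝ)
    (A : Matrix (Fin n1 ⊕ Fin n2) (Fin n1 ⊕ Fin n2) ℝ)
    (hA : A = Matrix.fromBlocks A11 A12 0 A22)
    (B : Matrix (Fin n1 ⊕ Fin n2) (Fin cm) ℝ)
    (Xm : Matrix (Fin cm) (Fin cm) ℝ) (hXm : Xm.PosDef)
    (ε : ℝ) (hε : 0 < ε)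
    (H1 : Matrix (Fin n1) (Fin n1) ℝ) (H2 : Matrix (Fin n2) (Fin n2) ℝ)
    (Xt : Matrix (Fin n1 ⊕ Fin n2) (Fin n1 ⊕ Fin n2) ℝ) (hXt : Xt = B * Xm⁻¹ * Bᵀ)
    (Xt11 : Matrix (Fin n1) (Fin n1) ℝ) (hXt11 : Xt11 = Xt.toBlocks₁₁)
    (Xt12 : Matrix (Fin n1) (Fin n2) ℝ) (hXt12 : Xt12 = Xt.toBlocks₁₂)
    (Xt22 : Matrix (Fin n2) (Fin n2) ℝ) (hXt22 : Xt22 = Xt.toBlocks₂₂)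
    (T2 : Matrix (Fin n2) (Fin n2) ℝ)
    (hT2 : T2 = ∑ k ∈ Finset.range p2,
      A22 ^ k * (Xt22 + H2ᵀ * H2 + ε • (1 : Matrix (Fin n2) (Fin n2) ℝ)) * A22ᵀ ^ k)
    (Xh11 : Matrix (Fin n1) (Fin n1) ℝ)
    (hXh11 : Xh11 = A12 * T2 * A12ᵀ + Xt11 +
      (Xt12 + A12 * T2 * A22ᵀ) * (T2 - A22 * T2 * A22ᵀ - Xt22)⁻¹ *
        (Xt12 + A12 * T2 * A22ᵀ)ᵀ)
    (T1 : Matrix (Fin n1) (Fin n1) ℝ)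
    (hT1 : T1 = ∑ k ∈ Finset.range p1,
      A11 ^ k * (Xh11 + H1ᵀ * H1 + ε • (1 : Matrix (Fin n1) (Fin n1) ℝ)) * A11ᵀ ^ k)
    (P : Matrix (Fin n1 ⊕ Fin n2) (Fin n1 ⊕ Fin n2) ℝ)
    (hP : P = Matrix.fromBlocks T1⁻¹ 0 0 T2⁻¹) :
    T1.PosDef ∧ T2.PosDef ∧
    (Matrix.fromBlocks (P - Aᵀ * P * A) (-(Aᵀ * P * B))
      (-(Bᵀ * P * A)) (Xm - Bᵀ * P * B)).PosDef := by
  have hXt_psd : Xt.PosSemidef := by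
    simpa [hXt] using hXm.inv.posSemidef.mul_mul_transpose_same B
  have hT2_lyap : T2 - A22 * T2 * A22ᵀ = Xt22 + H2ᵀ * H2 + ε • 1 :=
    hT2 ▸ finiteGramian_sub_mul_mul_transpose_of_pow_eq_zero hA22 _
  have hS_pd : (T2 - A22 * T2 * A22ᵀ - Xt22).PosDef := by
    rw [hT2_lyap, add_assoc, add_sub_cancel_left]
    exact posDef_transpose_mul_self_add_smul_one H2 hε
  have hXt11_psd : Xt11.PosSemidef := hXt11 ▸ hXt_psd.submatrix Sum.inl
  have hXt22_psd : Xt22.PosSemidef := hXt22 ▸ hXt_psd.submatrix Sum.inr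
  have hT2_pd : T2.PosDef :=
    hT2 ▸ posDef_finiteGramian hA22 (hXt22_psd.add_transpose_mul_self_add_smul_one H2 hε)
  have hXh11_psd : Xh11.PosSemidef := hXh11 ▸
    ((hT2_pd.posSemidef.mul_mul_transpose_same A12).add hXt11_psd).add
      (hS_pd.inv.posSemidef.mul_mul_transpose_same _)
  have hT1_pd : T1.PosDef :=
    hT1 ▸ posDef_finiteGramian hA11 (hXh11_psd.add_transpose_mul_self_add_smul_one H1 hε)
  have hT1_lyap : T1 - A11 * T1 * A11ᵀ = Xh11 + H1ᵀ * H1 + ε • 1 :=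
    hT1 ▸ finiteGramian_sub_mul_mul_transpose_of_pow_eq_zero hA11 _
  refine ⟨hT1_pd, hT2_pd, ?_⟩
  have hP_inv : P = (fromBlocks T1 0 0 T2)⁻¹ := by
    simp [hP, inv_fromBlocks_zero₂₁_of_isUnit_iff, hT1_pd.isUnit, hT2_pd.isUnit]
  have hdiss :
      (fromBlocks T1 0 0 T2 - A * fromBlocks T1 0 0 T2 * Aᴴ - B * Xm⁻¹ * Bᴴ).PosDef := by
    simp only [conjTranspose_eq_transpose_of_trivial, hA, ← hXt]
    refine posDef_fromBlocks_sub_conj_sub A11 A12 A22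
      (isHermitian_iff_isSymm.mp hT2_pd.isHermitian)
      (isHermitian_iff_isSymm.mp hXt_psd.isHermitian) (hXt22 ▸ hS_pd) ?_
    rw [← hXt11, ← hXt12, ← hXt22, hT1_lyap, hXh11]
    convert posDef_transpose_mul_self_add_smul_one H1 hε using 1
    abel
  simpa [hP_inv, conjTranspose_eq_transpose_of_trivial] using
    posDef_fromBlocks_inv_sub_of_posDef_sub (hT1_pd.fromBlocks_zero hT2_pd) hXm A B hdiss

/-- 2-D (Roesser) Gramian-type parameterization. With `A21 = 0`
and nilpotent `A11`, `A22`, the matrices `T2` and `T1` built from the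
Lyapunov-type sums are positive definite and, with
`P = blkdiag(T1⁻¹, T2⁻¹)`, the block matrix
`F = [[P − Aᵀ P A, −Aᵀ P B], [−Bᵀ P A, X₋ − Bᵀ P B]]` is positive definite. -/
theorem roesser_gramian_parameterization_renders_F_posdef
    (n1 n2 cm p1 p2 : ℕ)
    (A11 : Matrix (Fin n1) (Fin n1) ℝ) (hA11 : A11 ^ p1 = 0)
    (A22 : Matrix (Fin n2) (Fin n2) ℝ) (hA22 : A22 ^ p2 = 0)
    (A12 : Matrix (Fin n1) (Fin n2) ℝ)
    (B1 : Matrix (Fin n1) (Fin cm) ℝ) (B2 : Matrix (Fin n2) (Fin cm) ℝ)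
    (A : Matrix (Fin n1 ⊕ Fin n2) (Fin n1 ⊕ Fin n2) ℝ)
    (hA : A = Matrix.fromBlocks A11 A12 0 A22)
    (B : Matrix (Fin n1 ⊕ Fin n2) (Fin cm) ℝ) (hB : B = Matrix.fromRows B1 B2)
    (Xm : Matrix (Fin cm) (Fin cm) ℝ) (hXm : Xm.PosDef)
    (ε : ℝ) (hε : 0 < ε)
    (H1 : Matrix (Fin n1) (Fin n1) ℝ) (H2 : Matrix (Fin n2) (Fin n2) ℝ)
    (Xt : Matrix (Fin n1 ⊕ Fin n2) (Fin n1 ⊕ Fin n2) ℝ) (hXt : Xt = B * Xm⁻¹ * Bᵀ)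
    (Xt11 : Matrix (Fin n1) (Fin n1) ℝ) (hXt11 : Xt11 = Xt.toBlocks₁₁)
    (Xt12 : Matrix (Fin n1) (Fin n2) ℝ) (hXt12 : Xt12 = Xt.toBlocks₁₂)
    (Xt22 : Matrix (Fin n2) (Fin n2) ℝ) (hXt22 : Xt22 = Xt.toBlocks₂₂)
    (T2 : Matrix (Fin n2) (Fin n2) ℝ)
    (hT2 : T2 = ∑ k ∈ Finset.range p2,
      A22 ^ k * (Xt22 + H2ᵀ * H2 + ε • (1 : Matrix (Fin n2) (Fin n2) ℝ)) * A22ᵀ ^ k)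
    (Xh11 : Matrix (Fin n1) (Fin n1) ℝ)
    (hXh11 : Xh11 = A12 * T2 * A12ᵀ + Xt11 +
      (Xt12 + A12 * T2 * A22ᵀ) * (T2 - A22 * T2 * A22ᵀ - Xt22)⁻¹ *
        (Xt12 + A12 * T2 * A22ᵀ)ᵀ)
    (T1 : Matrix (Fin n1) (Fin n1) ℝ)
    (hT1 : T1 = ∑ k ∈ Finset.range p1,
      A11 ^ k * (Xh11 + H1ᵀ * H1 + ε • (1 : Matrix (Fin n1) (Fin n1) ℝ)) * A11ᵀ ^ k)
    (P : Matrix (Fin n1 ⊕ Fin n2) (Fin n1 ⊕ Fin n2) ℝ)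
    (hP : P = Matrix.fromBlocks T1⁻¹ 0 0 T2⁻¹) :
    T1.PosDef ∧ T2.PosDef ∧
    (Matrix.fromBlocks (P - Aᵀ * P * A) (-(Aᵀ * P * B))
      (-(Bᵀ * P * A)) (Xm - Bᵀ * P * B)).PosDef :=
  roesser_gramian_parameterization_renders_F_posdef_general n1 n2 cm p1 p2 A11 hA11 A22 hA22 A12 A
    hA B Xm hXm ε hε H1 H2 Xt hXt Xt11 hXt11 Xt12 hXt12 Xt22 hXt22 T2 hT2 Xh11 hXh11 T1 hT1 P hP
end

section
/- Let F = [[F1, F12], [F12ᵀ, F2]] ∈ ℝ^{(n1+m)×(n1+m)} be symmetric positive definite with F1 ∈ ℝ^{n1×n1}, F12 ∈ ℝ^{n1×m}, F2 ∈ ℝ^{m×m}. Let C1 ∈ ℝ^{c×n1}, ε > 0, ρ_p > 0, δ, ω, q ∈ ℝ^c with q having positive entries. Define η_i = ε + δ_i² + Σ_j |(C1 F1⁻¹ C1ᵀ)_{ij}| q_j / q_i, γ_i = η_i/2 + ω_i², Γ = diag(γ), l_i = √(2γ_i − η_i) / (γ_i ρ_p), L = diag(l), X = Lᵀ L, and Λ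 = Γ⁻¹. Then the matrix 2Γ − ρ_p² Γ X Γ − C1 F1⁻¹ C1ᵀ is positive definite, and for any L_Γ ∈ ℝ^{c×c} with L_Γᵀ L_Γ = 2Γ − ρ_p² Γ X Γ − C1 F1⁻¹ C1ᵀ, any invertible L_F ∈ ℝ^{m×m} with L_Fᵀ L_F = F2 − F12ᵀ F1⁻¹ F12, and any Ũ ∈ ℝ^{m×c} with Ũᵀ Ũ = I_c, the matrix Ĉ2 = C1 F1⁻¹ F12 − L_Γᵀ Ũᵀ L_F makes the block matrix [[F1, F12, −C1ᵀ Λ], [F12ᵀ, F2, −Ĉ2ᵀ Λ], [−Λ C1, −Λ Ĉ2, 2Λ − ρ_p² X]] positive semidefinite. -/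
open Matrix Finset

/-!
With `N = diag η`, the choice of `l` gives `2Γ - ρ_p² Γ X Γ = N` and `2Λ - ρ_p² X = Λ N Λ`.
Positive definiteness of `N - C1 F1⁻¹ C1ᵀ` is weighted diagonal dominance: AM-GM with the
weights `q` bounds `xᵀ S x` by `∑ᵢ (∑ⱼ |Sᵢⱼ| qⱼ / qᵢ) xᵢ²`, and `ηᵢ` exceeds that weighted row
sum by at least `ε`. For the LMI, take the Schur complement of the leading block `F1`: the
parameterization of `Ĉ2` is exactly what turns it into the Gram matrix of `[L_F, Ũ L_Γ Λ]`.
-/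

lemma two_mul_mul_le_div_mul_sq_add_div_mul_sq (a b : ℝ) {p r : ℝ} (hp : 0 < p) (hr : 0 < r) :
    2 * (a * b) ≤ r / p * a ^ 2 + p / r * b ^ 2 := by
  rw [div_mul_eq_mul_div, div_mul_eq_mul_div, div_add_div _ _ hp.ne' hr.ne',
    le_div_iff₀ (by positivity)]
  nlinarith [sq_nonneg (r * a - p * b)]

namespace Matrix

section DiagonalDominance

variable {n : Type*} [Fintype n]

theorem IsHermitian.dotProduct_mulVec_le_sum_abs_mul_div {S : Matrix n n ℝ} (hS : S.IsHermitian)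
    {q : n → ℝ} (hq : ∀ i, 0 < q i) (x : n → ℝ) :
    x ⬝ᵥ S *ᵥ x ≤ ∑ i, (∑ j, |S i j| * q j / q i) * x i ^ 2 := by
  set f : n → n → ℝ := fun i j => |S i j| * (q j / q i * x i ^ 2)
  have hpair : ∀ i j, 2 * (x i * (S i j * x j)) ≤ f i j + f j i := fun i j => by
    have hSji : S j i = S i j := by simpa using hS.apply i j
    have habs : x i * (S i j * x j) ≤ |S i j| * (|x i| * |x j|) := by
      rw [← abs_mul, ← abs_mul, mul_left_comm]; exact le_abs_self _
    calc 2 * (x i * (S i j * x j)) ≤ |S i j| * (2 * (|x i| * |x j|)) := by linarith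
      _ ≤ |S i j| * (q j / q i * |x i| ^ 2 + q i / q j * |x j| ^ 2) :=
          mul_le_mul_of_nonneg_left
            (two_mul_mul_le_div_mul_sq_add_div_mul_sq _ _ (hq i) (hq j)) (abs_nonneg _)
      _ = f i j + f j i := by simp only [f, sq_abs, hSji]; ring
  have hsum : 2 * (x ⬝ᵥ S *ᵥ x) ≤ 2 * ∑ i, ∑ j, f i j :=
    calc 2 * (x ⬝ᵥ S *ᵥ x) = ∑ i, ∑ j, 2 * (x i * (S i j * x j)) := by
          simp only [dotProduct, mulVec, mul_sum]
      _ ≤ ∑ i, ∑ j, (f i j + f j i) := sum_le_sum fun i _ => sum_le_sum fun j _ => hpair i j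
      _ = 2 * ∑ i, ∑ j, f i j := by
          simp only [sum_add_distrib]; rw [sum_comm (f := fun i j => f j i)]; ring
  refine (le_of_mul_le_mul_left hsum two_pos).trans_eq (sum_congr rfl fun i _ => ?_)
  simp only [f, sum_mul]
  exact sum_congr rfl fun j _ => by ring

theorem posDef_diagonal_sub_of_sum_abs_mul_div_lt [DecidableEq n] {S : Matrix n n ℝ}
    (hS : S.IsHermitian) {q η : n → ℝ} (hq : ∀ i, 0 < q i)
    (h : ∀ i, ∑ j, |S i j| * q j / q i < η i) :
    (diagonal η - S).PosDef := by
  refine .of_dotProduct_mulVec_pos ((isHermitian_diagonal η).sub hS) fun x hx => ?_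
  obtain ⟨k, hk⟩ := Function.ne_iff.mp hx
  rw [star_trivial, sub_mulVec, dotProduct_sub, sub_pos]
  calc x ⬝ᵥ S *ᵥ x ≤ ∑ i, (∑ j, |S i j| * q j / q i) * x i ^ 2 :=
        hS.dotProduct_mulVec_le_sum_abs_mul_div hq x
    _ < ∑ i, η i * x i ^ 2 :=
        sum_lt_sum (fun i _ => mul_le_mul_of_nonneg_right (h i).le (sq_nonneg _))
          ⟨k, mem_univ k, mul_lt_mul_of_pos_right (h k) (pow_two_pos_of_ne_zero hk)⟩
    _ = x ⬝ᵥ diagonal η *ᵥ x := by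
        simp only [dotProduct, mulVec_diagonal]; exact sum_congr rfl fun i _ => by ring

end DiagonalDominance

section Diagonal

variable {n : Type*} [Fintype n] [DecidableEq n] {K : Type*} [Field K]

theorem inv_diagonal_eq_diagonal_inv {γ : n → K} (hγ : ∀ i, γ i ≠ 0) :
    (diagonal γ)⁻¹ = diagonal γ⁻¹ :=
  inv_eq_right_inv <| by
    rw [diagonal_mul_diagonal, ← diagonal_one]; congr 1; ext i; exact mul_inv_cancel₀ (hγ i)

theorem two_smul_diagonal_sub_sq_smul_eq_diagonal {γ η l : n → K} {ρ : K}
    (hl : ∀ i, ρ ^ 2 * l i ^ 2 * γ i ^ 2 = 2 * γ i - η i) :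
    (2 : K) • diagonal γ - ρ ^ 2 • (diagonal γ * ((diagonal l)ᵀ * diagonal l) * diagonal γ) =
      diagonal η := by
  simp only [diagonal_transpose, diagonal_mul_diagonal, ← diagonal_smul, diagonal_sub]
  congr 1; ext i
  simp only [Pi.smul_apply, smul_eq_mul]
  linear_combination -hl i

theorem two_smul_diagonal_inv_sub_sq_smul_eq {γ η l : n → K} {ρ : K}
    (hl : ∀ i, ρ ^ 2 * l i ^ 2 * γ i ^ 2 = 2 * γ i - η i) (hγ : ∀ i, γ i ≠ 0) :
    (2 : K) • diagonal γ⁻¹ - ρ ^ 2 • ((diagonal l)ᵀ * diagonal l) =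
      diagonal γ⁻¹ * diagonal η * diagonal γ⁻¹ := by
  simp only [diagonal_transpose, diagonal_mul_diagonal, ← diagonal_smul, diagonal_sub]
  congr 1; ext i
  simp only [Pi.smul_apply, smul_eq_mul, Pi.inv_apply]
  have := hγ i
  field_simp
  linear_combination -hl i

end Diagonal

section SchurComplement

variable {l m n α : Type*}

theorem fromBlocks_fromBlocks_submatrix_sumAssoc_symm (A : Matrix l l α) (B : Matrix l m α)
    (C : Matrix m l α) (D : Matrix m m α) (E : Matrix l n α) (F : Matrix m n α)
    (G : Matrix n l α) (H : Matrix n m α) (K : Matrix n n α) :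
    (fromBlocks (fromBlocks A B C D) (fromRows E F) (fromCols G H) K).submatrix
        (Equiv.sumAssoc l m n).symm (Equiv.sumAssoc l m n).symm =
      fromBlocks A (fromCols B E) (fromRows C G) (fromBlocks D F H K) := by
  ext (i | i | i) (j | j | j) <;> rfl

variable [Fintype l] [Fintype m] [Fintype n] [DecidableEq l]
  {R : Type*} [CommRing R] [PartialOrder R] [StarRing R] [StarOrderedRing R]

theorem PosDef.posSemidef_fromBlocks_fromBlocks_iff {A : Matrix l l R} (hA : A.PosDef)
    [Invertible A] (B : Matrix l m R) (D : Matrix m m R) (E : Matrix l n R) (F : Matrix m n R)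
    (K : Matrix n n R) :
    (fromBlocks (fromBlocks A B Bᴴ D) (fromRows E F) (fromCols Eᴴ Fᴴ) K).PosSemidef ↔
      (fromBlocks (D - Bᴴ * A⁻¹ * B) (F - Bᴴ * A⁻¹ * E)
        (Fᴴ - Eᴴ * A⁻¹ * B) (K - Eᴴ * A⁻¹ * E)).PosSemidef := by
  rw [← posSemidef_submatrix_equiv (Equiv.sumAssoc l m n).symm,
    fromBlocks_fromBlocks_submatrix_sumAssoc_symm,
    ← conjTranspose_fromCols_eq_fromRows_conjTranspose, hA.fromBlocks₁₁,
    conjTranspose_fromCols_eq_fromRows_conjTranspose, fromRows_mul, fromRows_mul_fromCols]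
  congr! 1
  ext (i | i) (j | j) <;> rfl

end SchurComplement

end Matrix

section Parameterization

variable {l m n p k : Type*} [Fintype l] [Fintype n] [Fintype p] [Fintype k] [DecidableEq k]

theorem fromBlocks_eq_transpose_mul_self_of_parameterization {R : Type*} [CommRing R]
    {F12 : Matrix l m R} {F2 : Matrix m m R} {P : Matrix l l R} {C1 : Matrix n l R}
    {Ch2 : Matrix n m R} {Λ N : Matrix n n R} {LΓ : Matrix k n R} {LF : Matrix p m R}
    {Ut : Matrix p k R} (hΛ : Λᵀ = Λ) (hLF : LFᵀ * LF = F2 - F12ᵀ * P * F12)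
    (hUt : Utᵀ * Ut = 1) (hLΓ : LΓᵀ * LΓ = N - C1 * P * C1ᵀ)
    (hCh2 : Ch2 = C1 * P * F12 - LΓᵀ * Utᵀ * LF) :
    fromBlocks (F2 - F12ᵀ * P * F12) ((C1 * P * F12 - Ch2)ᵀ * Λ) (Λ * (C1 * P * F12 - Ch2))
        (Λ * (N - C1 * P * C1ᵀ) * Λ) =
      (fromCols LF (Ut * LΓ * Λ))ᵀ * fromCols LF (Ut * LΓ * Λ) := by
  have hres : C1 * P * F12 - Ch2 = LΓᵀ * Utᵀ * LF := by rw [hCh2, sub_sub_cancel]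
  rw [transpose_fromCols, fromRows_mul_fromCols, hres, ← hLF, ← hLΓ]
  simp only [transpose_mul, transpose_transpose, hΛ, Matrix.mul_assoc]
  rw [← Matrix.mul_assoc Utᵀ Ut, hUt, Matrix.one_mul]

theorem neg_mul_eq_conjTranspose_neg_transpose_mul {R : Type*} [CommRing R] [StarRing R]
    [TrivialStar R] {Λ : Matrix n n R} (hΛ : Λᵀ = Λ)
    (A : Matrix n m R) : -(Λ * A) = (-(Aᵀ * Λ))ᴴ := by
  rw [conjTranspose_eq_transpose_of_trivial, transpose_neg, transpose_mul, transpose_transpose, hΛ]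

variable {K : Type*} [Field K] [PartialOrder K] [StarRing K] [StarOrderedRing K] [TrivialStar K]

theorem posSemidef_fromBlocks_fromBlocks_of_parameterization [Fintype m] [DecidableEq l]
    {F1 : Matrix l l K} {F12 : Matrix l m K} {F2 : Matrix m m K} {C1 : Matrix n l K}
    {Ch2 : Matrix n m K} {Λ N : Matrix n n K} {LΓ : Matrix k n K} {LF : Matrix p m K}
    {Ut : Matrix p k K} (hF1 : F1.PosDef) (hΛ : Λᵀ = Λ)
    (hLF : LFᵀ * LF = F2 - F12ᵀ * F1⁻¹ * F12) (hUt : Utᵀ * Ut = 1)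
    (hLΓ : LΓᵀ * LΓ = N - C1 * F1⁻¹ * C1ᵀ) (hCh2 : Ch2 = C1 * F1⁻¹ * F12 - LΓᵀ * Utᵀ * LF) :
    (fromBlocks (fromBlocks F1 F12 F12ᵀ F2) (fromRows (-(C1ᵀ * Λ)) (-(Ch2ᵀ * Λ)))
      (fromCols (-(Λ * C1)) (-(Λ * Ch2))) (Λ * N * Λ)).PosSemidef := by
  have hF1inv : (F1⁻¹)ᵀ = F1⁻¹ := by simpa using hF1.isHermitian.inv.eq
  let _ := hF1.isUnit.invertible
  rw [neg_mul_eq_conjTranspose_neg_transpose_mul hΛ, neg_mul_eq_conjTranspose_neg_transpose_mul hΛ,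
    ← conjTranspose_eq_transpose_of_trivial F12, hF1.posSemidef_fromBlocks_fromBlocks_iff]
  have hGram : ((fromCols LF (Ut * LΓ * Λ))ᵀ * fromCols LF (Ut * LΓ * Λ)).PosSemidef := by
    simpa using posSemidef_conjTranspose_mul_self (fromCols LF (Ut * LΓ * Λ))
  rw [← fromBlocks_eq_transpose_mul_self_of_parameterization hΛ hLF hUt hLΓ hCh2] at hGram
  convert hGram using 2
  · rfl -- two instance paths to `Ring K`
  all_goals simp only [conjTranspose_eq_transpose_of_trivial, transpose_neg, transpose_mul,
    transpose_sub, transpose_transpose, hΛ, hF1inv, Matrix.mul_neg, Matrix.neg_mul,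
    Matrix.sub_mul, Matrix.mul_sub, Matrix.mul_assoc, neg_neg, sub_neg_eq_add]
  all_goals abel

end Parameterization

/-- Parameterization of a 2-D convolutional layer followed by a
maximum pooling layer with Lipschitz constant `ρ_p`: the matrix
`2Γ − ρ_p² Γ X Γ − C1 F1⁻¹ C1ᵀ` is positive definite and, for any Cholesky-type
factors `L_Γ`, `L_F` and any `Ũ` with orthonormal columns, the parameterized
`Ĉ2 = C1 F1⁻¹ F12 − L_Γᵀ Ũᵀ L_F` makes the 3×3 block LMI (with bottom-right
block `2Λ − ρ_p² X`) positive semidefinite. -/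
theorem conv2d_maxpool_parameterization_satisfies_LMI
    (n1 m c : ℕ)
    (F1 : Matrix (Fin n1) (Fin n1) ℝ) (F12 : Matrix (Fin n1) (Fin m) ℝ)
    (F2 : Matrix (Fin m) (Fin m) ℝ)
    (hF : (Matrix.fromBlocks F1 F12 F12ᵀ F2).PosDef)
    (C1 : Matrix (Fin c) (Fin n1) ℝ) (ε : ℝ) (hε : 0 < ε)
    (ρp : ℝ) (hρp : 0 < ρp)
    (δ ω q : Fin c → ℝ) (hq : ∀ i, 0 < q i)
    (η : Fin c → ℝ)
    (hη : ∀ i, η i = ε + δ i ^ 2 + ∑ j, |(C1 * F1⁻¹ * C1ᵀ) i j| * q j / q i)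
    (γ : Fin c → ℝ) (hγ : ∀ i, γ i = η i / 2 + ω i ^ 2)
    (Γ : Matrix (Fin c) (Fin c) ℝ) (hΓ : Γ = Matrix.diagonal γ)
    (l : Fin c → ℝ) (hl : ∀ i, l i = Real.sqrt (2 * γ i - η i) / (γ i * ρp))
    (L : Matrix (Fin c) (Fin c) ℝ) (hL : L = Matrix.diagonal l)
    (X : Matrix (Fin c) (Fin c) ℝ) (hX : X = Lᵀ * L)
    (Λ : Matrix (Fin c) (Fin c) ℝ) (hΛ : Λ = Γ⁻¹) :
    ((2 : ℝ) • Γ - ρp ^ 2 • (Γ * X * Γ) - C1 * F1⁻¹ * C1ᵀ).PosDef ∧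
    ∀ (LΓ : Matrix (Fin c) (Fin c) ℝ),
      LΓᵀ * LΓ = (2 : ℝ) • Γ - ρp ^ 2 • (Γ * X * Γ) - C1 * F1⁻¹ * C1ᵀ →
    ∀ (LF : Matrix (Fin m) (Fin m) ℝ), IsUnit LF →
      LFᵀ * LF = F2 - F12ᵀ * F1⁻¹ * F12 →
    ∀ (Ut : Matrix (Fin m) (Fin c) ℝ), Utᵀ * Ut = 1 →
    ∀ (Ch2 : Matrix (Fin c) (Fin m) ℝ),
      Ch2 = C1 * F1⁻¹ * F12 - LΓᵀ * Utᵀ * LF →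
    (Matrix.fromBlocks (Matrix.fromBlocks F1 F12 F12ᵀ F2)
      (Matrix.fromRows (-(C1ᵀ * Λ)) (-(Ch2ᵀ * Λ)))
      (Matrix.fromCols (-(Λ * C1)) (-(Λ * Ch2)))
      ((2 : ℝ) • Λ - ρp ^ 2 • X)).PosSemidef := by
  subst hΓ hL hX hΛ
  set S := C1 * F1⁻¹ * C1ᵀ
  have hrow_nonneg : ∀ i, 0 ≤ ∑ j, |S i j| * q j / q i := fun i =>
    sum_nonneg fun j _ => by have := hq i; have := hq j; positivity
  have hη_gt : ∀ i, ∑ j, |S i j| * q j / q i < η i := fun i => by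
    rw [hη i]; linarith [sq_nonneg (δ i)]
  have hγ_ne : ∀ i, γ i ≠ 0 := fun i => ne_of_gt <| by
    rw [hγ i]; linarith [sq_nonneg (ω i), hη_gt i, hrow_nonneg i]
  have hl_sq : ∀ i, ρp ^ 2 * l i ^ 2 * γ i ^ 2 = 2 * γ i - η i := fun i => by
    have h2γη : 0 ≤ 2 * γ i - η i := by rw [hγ i]; linarith [sq_nonneg (ω i)]
    have := hγ_ne i
    rw [hl i, div_pow, Real.sq_sqrt h2γη]
    field_simp
  have hN := two_smul_diagonal_sub_sq_smul_eq_diagonal hl_sq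
  have hF1 : F1.PosDef := hF.submatrix Sum.inl_injective
  have hS : S.IsHermitian := by
    simpa using isHermitian_mul_mul_conjTranspose C1 hF1.isHermitian.inv
  refine ⟨hN ▸ posDef_diagonal_sub_of_sum_abs_mul_div_lt hS hq hη_gt, ?_⟩
  intro LΓ hLΓ LF _ hLF Ut hUt Ch2 hCh2
  rw [inv_diagonal_eq_diagonal_inv hγ_ne, two_smul_diagonal_inv_sub_sq_smul_eq hl_sq hγ_ne]
  exact posSemidef_fromBlocks_fromBlocks_of_parameterization hF1 (diagonal_transpose _) hLF hUt
    (hLΓ.trans (by rw [hN])) hCh2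
end
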